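/- Suppose there is r_max ≥ 0 with 0 ≤ r_t(s) ≤ r_max for all t ∈ {1,…,H} and s ∈ S. Then for all 1 ≤ i ≤ j ≤ H and all s ∈ S, 0 ≤ Σ_{t=i}^{j} (P_{i:t−1} σ²_{t:j})(s) ≤ (j−i+1)² · r_max² ≤ H² · r_max². -/

import Mathlib

open Finset

/-- The operator `(P_t f)(s) = ∑_{s'} p_t(s,s') f(s')` induced by transition matrices `p`. -/
noncomputable def Pop {S : Type*} [Fintype S] (p : ℕ → S → S → ℝ) (t : ℕ) (f : S → ℝ) (s : S) : ℝ :=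
  ∑ s', p t s s' * f s'

/-- The multi-step operator `P_{i:j} = P_i P_{i+1} ⋯ P_j` (identity when `j < i`). -/
noncomputable def PC {S : Type*} [Fintype S] (p : ℕ → S → S → ℝ) (i j : ℕ) (f : S → ℝ) : S → ℝ :=
  (List.range' i (j + 1 - i)).foldr (fun t g => Pop p t g) f

/-- The value function: `V_{j:j} = r_j`, `V_{i:j} = r_i + P_i V_{i+1:j}` for `i < j`. -/
noncomputable def Vf {S : Type*} [Fintype S] (p : ℕ → S → S → ℝ) (r : ℕ → S → ℝ)
    (i j : ℕ) : S → ℝ :=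
  if _h : i < j then fun s => r i s + Pop p i (Vf p r (i + 1) j) s
  else r j
termination_by j - i
decreasing_by omega

/-- The local variance of the value function:
`σ²_{i:j}(s) = ∑_{s'} p_i(s,s') (V_{i+1:j}(s') − (P_i V_{i+1:j})(s))²` for `i < j`, and `0` else. -/
noncomputable def sigmaSq {S : Type*} [Fintype S] (p : ℕ → S → S → ℝ) (r : ℕ → S → ℝ)
    (i j : ℕ) (s : S) : ℝ :=
  if i < j then
    ∑ s', p i s s' * (Vf p r (i + 1) j s' - Pop p i (Vf p r (i + 1) j) s) ^ 2
  else 0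

/-
Write `W_{i:j} = ∑_{t=i}^{j} P_{i:t-1} σ²_{t:j}`. Splitting off `t = i` gives
`W_{i:j} = σ²_{i:j} + P_i W_{i+1:j}`, and with `σ²_{i:j} = P_i (V_{i+1:j}²) − (P_i V_{i+1:j})²`
this becomes `W_{i:j} + V_{i:j}² = r_i² + 2 r_i P_i V_{i+1:j} + P_i (W_{i+1:j} + V_{i+1:j}²)`,
the recursion of the second moment of the return `∑_{t=i}^{j} r_t` (law of total variance).
Since the return lies in `[0, (j-i+1) r_max]`, induction gives
`0 ≤ W_{i:j} ≤ W_{i:j} + V_{i:j}² ≤ ((j-i+1) r_max)²`.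
-/

section

variable {S : Type*} [Fintype S] {p : ℕ → S → S → ℝ} {r : ℕ → S → ℝ} {i j : ℕ}

section Pop

variable {t : ℕ} {s : S}

theorem Pop_add (f g : S → ℝ) : Pop p t (f + g) s = Pop p t f s + Pop p t g s := by
  simp only [Pop, Pi.add_apply, mul_add, sum_add_distrib]

theorem Pop_sum {ι : Type*} (A : Finset ι) (f : ι → S → ℝ) :
    Pop p t (∑ x ∈ A, f x) s = ∑ x ∈ A, Pop p t (f x) s := by
  simp only [Pop, Finset.sum_apply, mul_sum]
  exact sum_comm

theorem Pop_nonneg (hp : ∀ s', 0 ≤ p t s s') {f : S → ℝ} (hf : 0 ≤ f) :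
    0 ≤ Pop p t f s :=
  sum_nonneg fun s' _ => mul_nonneg (hp s') (hf s')

theorem Pop_le_of_forall_le (hp : ∀ s', 0 ≤ p t s s') (hsum : ∑ s', p t s s' = 1)
    {f : S → ℝ} {c : ℝ} (hf : ∀ s', f s' ≤ c) : Pop p t f s ≤ c :=
  calc Pop p t f s ≤ ∑ s', p t s s' * c :=
        sum_le_sum fun s' _ => mul_le_mul_of_nonneg_left (hf s') (hp s')
    _ = c := by rw [← sum_mul, hsum, one_mul]

theorem sum_mul_sub_Pop_sq (hsum : ∑ s', p t s s' = 1) (f : S → ℝ) :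
    ∑ s', p t s s' * (f s' - Pop p t f s) ^ 2 = Pop p t (f ^ 2) s - Pop p t f s ^ 2 := by
  set m := Pop p t f s
  have hm : ∑ s', p t s s' * f s' = m := rfl
  calc ∑ s', p t s s' * (f s' - m) ^ 2
      = ∑ s', p t s s' * f s' ^ 2 - 2 * m * ∑ s', p t s s' * f s'
          + m ^ 2 * ∑ s', p t s s' := by
        simp only [mul_sum, ← sum_sub_distrib, ← sum_add_distrib]
        exact sum_congr rfl fun s' _ => by ring
    _ = Pop p t (f ^ 2) s - m ^ 2 := by
        rw [hm, hsum]; simp only [Pop, Pi.pow_apply]; ring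

end Pop

theorem Vf_self : Vf p r j j = r j := by
  rw [Vf, dif_neg (lt_irrefl j)]

theorem Vf_of_lt (h : i < j) (s : S) : Vf p r i j s = r i s + Pop p i (Vf p r (i + 1) j) s := by
  rw [Vf, dif_pos h]

theorem PC_of_lt {f : S → ℝ} (h : j < i) : PC p i j f = f := by
  rw [PC, Nat.sub_eq_zero_of_le h, List.range'_zero, List.foldr_nil]

theorem PC_of_le {f : S → ℝ} (h : i ≤ j) : PC p i j f = Pop p i (PC p (i + 1) j f) := by
  rw [PC, PC, show j + 1 - i = j + 1 - (i + 1) + 1 by omega, List.range'_succ, List.foldr_cons]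

theorem sigmaSq_self : sigmaSq p r j j = 0 := by
  ext s
  exact if_neg (lt_irrefl j)

theorem sigmaSq_nonneg (hp : ∀ s', 0 ≤ p i s s') : 0 ≤ sigmaSq p r i j s := by
  unfold sigmaSq
  split_ifs
  · exact sum_nonneg fun s' _ => mul_nonneg (hp s') (sq_nonneg _)
  · exact le_rfl

theorem sigmaSq_of_lt {s : S} (hsum : ∑ s', p i s s' = 1) (h : i < j) :
    sigmaSq p r i j s = Pop p i (Vf p r (i + 1) j ^ 2) s - Pop p i (Vf p r (i + 1) j) s ^ 2 := by
  rw [sigmaSq, if_pos h, sum_mul_sub_Pop_sq hsum]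

-- `t - 1` truncates at `0`, where `P_{0:0} = P_0 ≠ id`: hence the positivity hypotheses below.
noncomputable def propagatedVarSum (p : ℕ → S → S → ℝ) (r : ℕ → S → ℝ) (i j : ℕ) :
    S → ℝ :=
  ∑ t ∈ Icc i j, PC p i (t - 1) (sigmaSq p r t j)

theorem propagatedVarSum_self (hj : 0 < j) : propagatedVarSum p r j j = 0 := by
  rw [propagatedVarSum, Icc_self, sum_singleton, sigmaSq_self, PC_of_lt (by omega)]

theorem propagatedVarSum_of_lt (hi : 1 ≤ i) (h : i < j) (s : S) :
    propagatedVarSum p r i j s =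
      sigmaSq p r i j s + Pop p i (propagatedVarSum p r (i + 1) j) s := by
  have hshift : ∀ t ∈ Icc (i + 1) j,
      PC p i (t - 1) (sigmaSq p r t j) = Pop p i (PC p (i + 1) (t - 1) (sigmaSq p r t j)) :=
    fun t ht => PC_of_le (by grind)
  rw [propagatedVarSum, ← insert_Icc_add_one_left_eq_Icc h.le, sum_insert (by simp),
    PC_of_lt (by omega), sum_congr rfl hshift, Pi.add_apply, Finset.sum_apply, ← Pop_sum,
    propagatedVarSum]

theorem propagatedVarSum_nonneg (hp : ∀ t ∈ Ico i j, ∀ s s', 0 ≤ p t s s') (hi : 1 ≤ i)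
    (hij : i ≤ j) :
    0 ≤ propagatedVarSum p r i j := by
  induction hij using Nat.decreasingInduction with
  | self => rw [propagatedVarSum_self (by omega)]
  | of_succ i hij ih =>
    intro s
    have hpi := hp i (by simp [hij])
    rw [Pi.zero_apply, propagatedVarSum_of_lt hi hij]
    exact add_nonneg (sigmaSq_nonneg (hpi s))
      (Pop_nonneg (hpi s) (ih (fun t ht => hp t (Ico_subset_Ico_left i.le_succ ht)) (by omega)))

theorem propagatedVarSum_add_sq_Vf_of_lt {s : S}
    (hsum : ∑ s', p i s s' = 1) (hi : 1 ≤ i) (h : i < j) :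
    propagatedVarSum p r i j s + Vf p r i j s ^ 2 =
      r i s ^ 2 + 2 * r i s * Pop p i (Vf p r (i + 1) j) s
        + Pop p i (propagatedVarSum p r (i + 1) j + Vf p r (i + 1) j ^ 2) s := by
  rw [propagatedVarSum_of_lt hi h, sigmaSq_of_lt hsum h, Vf_of_lt h, Pop_add]
  ring

section Bounds

open Matrix

variable [DecidableEq S] {rmax : ℝ}

theorem Vf_le (hp : ∀ t ∈ Ico i j, p t ∈ rowStochastic ℝ S)
    (hr : ∀ t ∈ Icc i j, ∀ s, r t s ≤ rmax) (hij : i ≤ j) (s : S) :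
    Vf p r i j s ≤ ((j : ℝ) - i + 1) * rmax := by
  induction hij using Nat.decreasingInduction generalizing s with
  | self => simpa [Vf_self] using hr j (by simp) s
  | of_succ i hij ih =>
    have hpi := hp i (by simp [hij])
    have hPV := Pop_le_of_forall_le (fun s' => nonneg_of_mem_rowStochastic hpi)
      (sum_row_of_mem_rowStochastic hpi s)
      (ih (fun t ht => hp t (Ico_subset_Ico_left i.le_succ ht))
        (fun t ht => hr t (Icc_subset_Icc_left i.le_succ ht)))
    rw [Vf_of_lt hij]
    have := hr i (by simp [hij.le]) s
    push_cast at hPV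
    linarith

theorem propagatedVarSum_add_sq_Vf_le (hp : ∀ t ∈ Ico i j, p t ∈ rowStochastic ℝ S)
    (hr : ∀ t ∈ Icc i j, ∀ s, 0 ≤ r t s ∧ r t s ≤ rmax) (hi : 1 ≤ i) (hij : i ≤ j)
    (s : S) :
    propagatedVarSum p r i j s + Vf p r i j s ^ 2 ≤ (((j : ℝ) - i + 1) * rmax) ^ 2 := by
  induction hij using Nat.decreasingInduction generalizing s with
  | self =>
    obtain ⟨hr0, hr1⟩ := hr j (by simp) s
    rw [propagatedVarSum_self (by omega), Vf_self]
    simpa using pow_le_pow_left₀ hr0 hr1 2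
  | of_succ i hij ih =>
    have hpi := hp i (by simp [hij])
    have hp' : ∀ t ∈ Ico (i + 1) j, p t ∈ rowStochastic ℝ S :=
      fun t ht => hp t (Ico_subset_Ico_left i.le_succ ht)
    have hr' : ∀ t ∈ Icc (i + 1) j, ∀ s, 0 ≤ r t s ∧ r t s ≤ rmax :=
      fun t ht => hr t (Icc_subset_Icc_left i.le_succ ht)
    have hPop_le {f : S → ℝ} {c : ℝ} : (∀ s', f s' ≤ c) → Pop p i f s ≤ c :=
      Pop_le_of_forall_le (fun s' => nonneg_of_mem_rowStochastic hpi)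
        (sum_row_of_mem_rowStochastic hpi s)
    have hPV := hPop_le (Vf_le hp' (fun t ht s => (hr' t ht s).2) hij)
    have hPM := hPop_le (f := propagatedVarSum p r (i + 1) j + Vf p r (i + 1) j ^ 2)
      (ih hp' hr' (by omega))
    obtain ⟨hr0, hr1⟩ := hr i (by simp [hij.le]) s
    have hji : (0 : ℝ) ≤ j - i := by rw [sub_nonneg]; exact_mod_cast hij.le
    rw [propagatedVarSum_add_sq_Vf_of_lt (sum_row_of_mem_rowStochastic hpi s) hi hij]
    push_cast at hPV hPM
    nlinarith [mul_le_mul_of_nonneg_left hPV hr0,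
      mul_nonneg (sub_nonneg.2 hr1) (mul_nonneg hji (hr0.trans hr1))]

end Bounds

end

theorem sum_propagated_local_variances_bound_general
    {S : Type*} [Fintype S] (H : ℕ)
    (r : ℕ → S → ℝ) (p : ℕ → S → S → ℝ)
    (hp_nonneg : ∀ t, 1 ≤ t → t ≤ H → ∀ s s', 0 ≤ p t s s')
    (hp_sum : ∀ t, 1 ≤ t → t ≤ H → ∀ s, ∑ s', p t s s' = 1)
    (rmax : ℝ)
    (hr : ∀ t, 1 ≤ t → t ≤ H → ∀ s : S, 0 ≤ r t s ∧ r t s ≤ rmax)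
    (i j : ℕ) (hi : 1 ≤ i) (hij : i ≤ j) (hj : j ≤ H) (s : S) :
    0 ≤ ∑ t ∈ Finset.Icc i j, PC p i (t - 1) (sigmaSq p r t j) s ∧
    ∑ t ∈ Finset.Icc i j, PC p i (t - 1) (sigmaSq p r t j) s ≤
      ((j - i + 1 : ℕ) : ℝ) ^ 2 * rmax ^ 2 ∧
    ((j - i + 1 : ℕ) : ℝ) ^ 2 * rmax ^ 2 ≤ (H : ℝ) ^ 2 * rmax ^ 2 := by
  classical
  have hp : ∀ t ∈ Ico i j, p t ∈ Matrix.rowStochastic ℝ S := fun t ht => by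
    rw [mem_Ico] at ht
    exact Matrix.mem_rowStochastic_iff_sum.2
      ⟨hp_nonneg t (by omega) (by omega), hp_sum t (by omega) (by omega)⟩
  have hr' : ∀ t ∈ Icc i j, ∀ s, 0 ≤ r t s ∧ r t s ≤ rmax := fun t ht => by
    rw [mem_Icc] at ht
    exact hr t (by omega) (by omega)
  have hlen : ((j - i + 1 : ℕ) : ℝ) = (j : ℝ) - i + 1 := by push_cast [Nat.cast_sub hij]; ring
  rw [← Finset.sum_apply, ← propagatedVarSum, hlen, ← mul_pow]
  refine ⟨propagatedVarSum_nonneg (fun t ht _ _ => Matrix.nonneg_of_mem_rowStochastic (hp t ht))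
    hi hij s, ?_, ?_⟩
  · linarith [propagatedVarSum_add_sq_Vf_le hp hr' hi hij s, sq_nonneg (Vf p r i j s)]
  · rw [← hlen, mul_pow]
    gcongr
    exact_mod_cast (by omega : j - i + 1 ≤ H)

/-- The total sum of propagated local variances is bounded by `(j-i+1)² r_max² ≤ H² r_max²`. -/
theorem sum_propagated_local_variances_bound
    {S : Type*} [Fintype S] [Nonempty S] (H : ℕ) (hH : 1 ≤ H)
    (r : ℕ → S → ℝ) (p : ℕ → S → S → ℝ)
    (hp_nonneg : ∀ t, 1 ≤ t → t ≤ H → ∀ s s', 0 ≤ p t s s')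
    (hp_sum : ∀ t, 1 ≤ t → t ≤ H → ∀ s, ∑ s', p t s s' = 1)
    (rmax : ℝ) (hrmax : 0 ≤ rmax)
    (hr : ∀ t, 1 ≤ t → t ≤ H → ∀ s : S, 0 ≤ r t s ∧ r t s ≤ rmax)
    (i j : ℕ) (hi : 1 ≤ i) (hij : i ≤ j) (hj : j ≤ H) (s : S) :
    0 ≤ ∑ t ∈ Finset.Icc i j, PC p i (t - 1) (sigmaSq p r t j) s ∧
    ∑ t ∈ Finset.Icc i j, PC p i (t - 1) (sigmaSq p r t j) s ≤
      ((j - i + 1 : ℕ) : ℝ) ^ 2 * rmax ^ 2 ∧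
    ((j - i + 1 : ℕ) : ℝ) ^ 2 * rmax ^ 2 ≤ (H : ℝ) ^ 2 * rmax ^ 2 :=
  sum_propagated_local_variances_bound_general H r p hp_nonneg hp_sum rmax hr i j hi hij hj s
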